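/- arXiv:1605.01275 — 3 statements merged into one kernel-verified Lean document; each statement's English description precedes it below -/
import Mathlib

section
/- Let X be a Binomial(n,p) random variable. Then for every integer k with 1 ≤ k ≤ n, the conditional probability P(X ≥ k | X ≥ 1) is at most P(X ≥ k−1). -/
/-!
Write `q = 1 - p`. Since `P(X ≥ 1) = 1 - qⁿ` and `P(X ≥ k - 1) = P(X = k - 1) + P(X ≥ k)`, the claim
is equivalent to `qⁿ P(X ≥ m) ≤ P(X = m)` for `m = k - 1`. This holds term by term:
`qⁿ P(X = m + i) ≤ P(X = m) P(Y = i)` with `Y ~ Binomial(n - m, p)`, because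
`C(n, m + i) ≤ C(n, m) C(n - m, i)` and `qⁿ ≤ q^(n - m)`; summing over `i` gives at most `P(X = m)`.
-/

open Finset

theorem Nat.choose_add_le_choose_mul_choose (n m i : ℕ) :
    n.choose (m + i) ≤ n.choose m * (n - m).choose i :=
  calc n.choose (m + i) ≤ n.choose (m + i) * (m + i).choose m :=
        Nat.le_mul_of_pos_right _ (Nat.choose_pos (Nat.le_add_right m i))
    _ = n.choose m * (n - m).choose i := by
        simpa using Nat.choose_mul (n := n) (Nat.le_add_right m i)

def binomialProb (n : ℕ) (p : ℝ) (j : ℕ) : ℝ :=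
  n.choose j * p ^ j * (1 - p) ^ (n - j)

section binomialProb

variable {p : ℝ}

lemma binomialProb_nonneg (hp0 : 0 ≤ p) (hp1 : p ≤ 1) (n j : ℕ) : 0 ≤ binomialProb n p j := by
  have : 0 ≤ 1 - p := by linarith
  unfold binomialProb
  positivity

lemma sum_range_binomialProb (n : ℕ) (p : ℝ) : ∑ j ∈ range (n + 1), binomialProb n p j = 1 := by
  have := add_pow p (1 - p) n
  rw [add_sub_cancel, one_pow] at this
  rw [this]
  exact sum_congr rfl fun j _ => by unfold binomialProb; ring

lemma sum_Icc_one_binomialProb (n : ℕ) (p : ℝ) :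
    ∑ j ∈ Icc 1 n, binomialProb n p j = 1 - (1 - p) ^ n := by
  have htotal := sum_range_binomialProb n p
  rw [Nat.range_succ_eq_Icc_zero, ← insert_Icc_add_one_left_eq_Icc n.zero_le,
    sum_insert (by simp), zero_add] at htotal
  have hzero : binomialProb n p 0 = (1 - p) ^ n := by simp [binomialProb]
  linarith

lemma pow_mul_binomialProb_add_le (hp0 : 0 ≤ p) (hp1 : p ≤ 1) (n m i : ℕ) :
    (1 - p) ^ n * binomialProb n p (m + i) ≤ binomialProb n p m * binomialProb (n - m) p i := by
  have hq0 : 0 ≤ 1 - p := by linarith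
  have hchoose : (n.choose (m + i) : ℝ) ≤ n.choose m * (n - m).choose i := by
    exact_mod_cast Nat.choose_add_le_choose_mul_choose n m i
  have hpow : (1 - p) ^ n ≤ (1 - p) ^ (n - m) :=
    pow_le_pow_of_le_one hq0 (by linarith) (Nat.sub_le n m)
  unfold binomialProb
  rw [pow_add, Nat.sub_sub]
  calc _ = n.choose (m + i) * (p ^ m * p ^ i) * ((1 - p) ^ n * (1 - p) ^ (n - (m + i))) := by
        ring
    _ ≤ (n.choose m * (n - m).choose i) * (p ^ m * p ^ i) *
          ((1 - p) ^ (n - m) * (1 - p) ^ (n - (m + i))) := by gcongr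
    _ = _ := by ring

lemma pow_mul_sum_Icc_binomialProb_le (hp0 : 0 ≤ p) (hp1 : p ≤ 1) (n m : ℕ) :
    (1 - p) ^ n * ∑ j ∈ Icc m n, binomialProb n p j ≤ binomialProb n p m := by
  rw [← Ico_add_one_right_eq_Icc, sum_Ico_eq_sum_range, mul_sum]
  calc ∑ i ∈ range (n + 1 - m), (1 - p) ^ n * binomialProb n p (m + i)
      ≤ ∑ i ∈ range (n + 1 - m), binomialProb n p m * binomialProb (n - m) p i :=
        sum_le_sum fun i _ => pow_mul_binomialProb_add_le hp0 hp1 n m i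
    _ = binomialProb n p m * ∑ i ∈ range (n + 1 - m), binomialProb (n - m) p i :=
        (mul_sum _ _ _).symm
    _ ≤ binomialProb n p m * ∑ i ∈ range (n - m + 1), binomialProb (n - m) p i := by
        refine mul_le_mul_of_nonneg_left ?_ (binomialProb_nonneg hp0 hp1 n m)
        exact sum_le_sum_of_subset_of_nonneg (range_subset_range.2 (by omega))
          fun i _ _ => binomialProb_nonneg hp0 hp1 (n - m) i
    _ = binomialProb n p m := by rw [sum_range_binomialProb, mul_one]

end binomialProb

/-- For a Binomial(n,p) random variable X and 1 ≤ k ≤ n,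
P(X ≥ k | X ≥ 1) ≤ P(X ≥ k−1). -/
theorem binomial_cond_tail_le (n : ℕ) (p : ℝ) (hp : 0 < p) (hp1 : p ≤ 1)
    (k : ℕ) (hk1 : 1 ≤ k) (hkn : k ≤ n) :
    (∑ j ∈ Finset.Icc k n, (n.choose j : ℝ) * p ^ j * (1 - p) ^ (n - j)) /
      (∑ j ∈ Finset.Icc 1 n, (n.choose j : ℝ) * p ^ j * (1 - p) ^ (n - j)) ≤
    ∑ j ∈ Finset.Icc (k - 1) n, (n.choose j : ℝ) * p ^ j * (1 - p) ^ (n - j) := by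
  change (∑ j ∈ Icc k n, binomialProb n p j) / (∑ j ∈ Icc 1 n, binomialProb n p j) ≤
    ∑ j ∈ Icc (k - 1) n, binomialProb n p j
  have hsplit : ∑ j ∈ Icc (k - 1) n, binomialProb n p j =
      binomialProb n p (k - 1) + ∑ j ∈ Icc k n, binomialProb n p j := by
    rw [← insert_Icc_add_one_left_eq_Icc (by omega : k - 1 ≤ n), sum_insert (by simp),
      Nat.sub_add_cancel hk1]
  have hkey := pow_mul_sum_Icc_binomialProb_le hp.le hp1 n (k - 1)
  have hpos : 0 < 1 - (1 - p) ^ n :=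
    sub_pos.2 (pow_lt_one₀ (by linarith) (by linarith) (by omega))
  rw [sum_Icc_one_binomialProb, div_le_iff₀ hpos]
  linarith
end

section
/- The total variation distance between Poisson(λ) and 1 + Poisson(λ) (the law of a Poisson(λ) variable shifted by 1) is at most e^{−λ} λ^{λ}/λ! when λ is a positive integer; in particular, for λ = 4n² with n ≥ 1 an integer, this distance is at most 1/n. -/
/-!
Write `p` for the Poisson(m) mass function and `d j = p j - p (j - 1)` for the signed mass of
Poisson(m) minus 1 + Poisson(m) at `j`. Since `p (k + 1) = p k * m / (k + 1)`, the mass function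
increases up to its mode `m` and decreases afterwards, so `d ≥ 0` on `[0, m]` and `d ≤ 0` beyond.
Hence `∑_{j ∈ A} d j` is maximised by `A = [0, m]`, where it telescopes to `p m`; as `∑ d = 0`,
the complement of `A` bounds it from below. Stirling's bound `m! ≥ √(2πm) (m/e)^m` then gives
`p m ≤ 1/√(2πm)`, which for `m = 4n²` is below `1/n`.
-/

open Real Finset

section SignChange

variable {d : ℕ → ℝ} {m : ℕ}

lemma tsum_indicator_le_sum_range_of_sign_change (hd : Summable d) (hpos : ∀ j ≤ m, 0 ≤ d j)
    (hneg : ∀ j, m < j → d j ≤ 0) (A : Set ℕ) :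
    ∑' j, A.indicator d j ≤ ∑ j ∈ range (m + 1), d j := by
  calc ∑' j, A.indicator d j ≤ ∑' j, (Set.Iic m).indicator d j := by
        refine (hd.indicator A).tsum_le_tsum (fun j => ?_) (hd.indicator _)
        rcases le_or_gt j m with hj | hj
        · rw [Set.indicator_of_mem (Set.mem_Iic.2 hj)]
          exact Set.indicator_le_self' (fun _ _ => hpos j hj) j
        · rw [Set.indicator_of_notMem (s := Set.Iic m) (by simpa using hj)]
          by_cases hA : j ∈ A
          · rw [Set.indicator_of_mem hA]
            exact hneg j hj
          · rw [Set.indicator_of_notMem hA]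
    _ = ∑ j ∈ range (m + 1), d j := by
        rw [tsum_eq_sum (s := range (m + 1)) fun j hj =>
          Set.indicator_of_notMem (by simpa using hj) d]
        exact sum_congr rfl fun j hj => Set.indicator_of_mem (by simpa [Nat.lt_succ_iff] using hj) d

lemma abs_tsum_indicator_le_sum_range_of_sign_change (hd : Summable d) (hzero : ∑' j, d j = 0)
    (hpos : ∀ j ≤ m, 0 ≤ d j) (hneg : ∀ j, m < j → d j ≤ 0) (A : Set ℕ) :
    |∑' j, A.indicator d j| ≤ ∑ j ∈ range (m + 1), d j := by
  have hcompl : ∑' j, A.indicator d j + ∑' j, Aᶜ.indicator d j = 0 := by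
    rw [← hzero, ← (hd.indicator A).tsum_add (hd.indicator Aᶜ)]
    simp only [Set.indicator_self_add_compl_apply]
  have hA := tsum_indicator_le_sum_range_of_sign_change hd hpos hneg A
  have hAc := tsum_indicator_le_sum_range_of_sign_change hd hpos hneg Aᶜ
  exact abs_le.2 ⟨by linarith, hA⟩

end SignChange

def shiftDiff (p : ℕ → ℝ) : ℕ → ℝ
  | 0 => p 0
  | k + 1 => p (k + 1) - p k

section ShiftDiff

variable {p : ℕ → ℝ}

lemma sum_range_shiftDiff (p : ℕ → ℝ) (m : ℕ) : ∑ j ∈ range (m + 1), shiftDiff p j = p m := by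
  induction m with
  | zero => simp [shiftDiff]
  | succ m ih => rw [sum_range_succ, ih, shiftDiff]; ring

lemma hasSum_shiftDiff (hp : Summable p) : HasSum (shiftDiff p) 0 := by
  have hsucc : HasSum (fun k => shiftDiff p (k + 1)) (∑' k, p (k + 1) - ∑' k, p k) :=
    ((summable_nat_add_iff 1).2 hp).hasSum.sub hp.hasSum
  rw [hp.tsum_eq_zero_add, sub_add_cancel_right] at hsucc
  rw [← hasSum_nat_add_iff' 1]
  simpa [shiftDiff] using hsucc

lemma tsum_indicator_sub_tsum_indicator_preimage_succ (hp : Summable p) (A : Set ℕ) :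
    ∑' k, A.indicator p k - ∑' k, ((· + 1) ⁻¹' A).indicator p k =
      ∑' j, A.indicator (shiftDiff p) j := by
  have hA : Summable (A.indicator p) := hp.indicator A
  have hA' : Summable (((· + 1) ⁻¹' A).indicator p) := hp.indicator _
  have hsucc : (fun k => A.indicator (shiftDiff p) (k + 1)) =
      fun k => A.indicator p (k + 1) - ((· + 1) ⁻¹' A).indicator p k := by
    ext k
    by_cases hk : k + 1 ∈ A <;> simp [Set.indicator, hk, shiftDiff]
  rw [hA.tsum_eq_zero_add, ((hasSum_shiftDiff hp).summable.indicator A).tsum_eq_zero_add, hsucc,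
    ((summable_nat_add_iff 1).2 hA).tsum_sub hA', add_sub_assoc]
  by_cases h0 : 0 ∈ A <;> simp [h0, shiftDiff]

theorem abs_tsum_indicator_sub_shift_le_of_unimodal (hp : Summable p) (h₀ : 0 ≤ p 0) {m : ℕ}
    (hmono : ∀ k < m, p k ≤ p (k + 1)) (hanti : ∀ k, m ≤ k → p (k + 1) ≤ p k) (A : Set ℕ) :
    |∑' k, A.indicator p k - ∑' k, ((· + 1) ⁻¹' A).indicator p k| ≤ p m := by
  have hpos : ∀ j ≤ m, 0 ≤ shiftDiff p j
    | 0, _ => h₀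
    | k + 1, hk => sub_nonneg.2 (hmono k hk)
  have hneg : ∀ j, m < j → shiftDiff p j ≤ 0
    | k + 1, hk => sub_nonpos.2 (hanti k (Nat.lt_succ_iff.1 hk))
  rw [tsum_indicator_sub_tsum_indicator_preimage_succ hp, ← sum_range_shiftDiff p m]
  exact abs_tsum_indicator_le_sum_range_of_sign_change (hasSum_shiftDiff hp).summable
    (hasSum_shiftDiff hp).tsum_eq hpos hneg A

end ShiftDiff

noncomputable def poissonMass (r : ℝ) (k : ℕ) : ℝ := exp (-r) * r ^ k / k.factorial

section Poisson

variable {r : ℝ}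

lemma summable_poissonMass (r : ℝ) : Summable (poissonMass r) := by
  unfold poissonMass
  simpa only [mul_div_assoc] using
    (summable_pow_div_factorial r).mul_left (exp (-r))

lemma poissonMass_nonneg (hr : 0 ≤ r) (k : ℕ) : 0 ≤ poissonMass r k := by
  unfold poissonMass; positivity

lemma poissonMass_succ (r : ℝ) (k : ℕ) :
    poissonMass r (k + 1) = poissonMass r k * (r / (k + 1)) := by
  simp only [poissonMass, Nat.factorial_succ, pow_succ, Nat.cast_mul, Nat.cast_succ]
  field_simp

lemma poissonMass_le_succ (hr : 0 ≤ r) {k : ℕ} (hk : k + 1 ≤ r) :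
    poissonMass r k ≤ poissonMass r (k + 1) := by
  rw [poissonMass_succ]
  exact le_mul_of_one_le_right (poissonMass_nonneg hr k) ((one_le_div (by positivity)).2 hk)

lemma poissonMass_succ_le (hr : 0 ≤ r) {k : ℕ} (hk : r ≤ k + 1) :
    poissonMass r (k + 1) ≤ poissonMass r k := by
  rw [poissonMass_succ]
  exact mul_le_of_le_one_right (poissonMass_nonneg hr k) ((div_le_one (by positivity)).2 hk)

lemma poissonMass_self_le_inv_sqrt {m : ℕ} (hm : m ≠ 0) :
    poissonMass m m ≤ (√(2 * π * m))⁻¹ := by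
  have hstirling := Stirling.le_factorial_stirling m
  rw [div_pow, ← exp_nat_mul, mul_one, div_eq_mul_inv, ← exp_neg] at hstirling
  rw [poissonMass, div_le_iff₀ (by positivity), ← div_eq_inv_mul, le_div_iff₀ (by positivity)]
  linarith

theorem abs_tsum_indicator_poissonMass_sub_shift_le (m : ℕ) (A : Set ℕ) :
    |∑' k, A.indicator (poissonMass m) k - ∑' k, ((· + 1) ⁻¹' A).indicator (poissonMass m) k| ≤
      poissonMass m m :=
  abs_tsum_indicator_sub_shift_le_of_unimodal (summable_poissonMass m)
    (poissonMass_nonneg m.cast_nonneg 0)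
    (fun _ hk => poissonMass_le_succ m.cast_nonneg (by exact_mod_cast hk))
    (fun _ hk => poissonMass_succ_le m.cast_nonneg (by exact_mod_cast hk.trans (Nat.le_succ _))) A

end Poisson

open Classical in
/-- The total variation distance between Poisson(λ) and 1 + Poisson(λ) is at most
e^{−λ} λ^λ/λ! when λ = m is a positive integer; in particular for λ = 4n² (n ≥ 1) it is
at most 1/n.  Here μ(A) = Σ_{k∈A} e^{−m} m^k/k! and ν(A) = Σ_{k+1∈A} e^{−m} m^k/k!. -/
theorem poisson_shift_tv_bound :
    (∀ m : ℕ, 0 < m → ∀ A : Set ℕ,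
      |(∑' k : ℕ, if k ∈ A then Real.exp (-(m : ℝ)) * (m : ℝ) ^ k / k.factorial else 0) -
        (∑' k : ℕ, if k + 1 ∈ A then Real.exp (-(m : ℝ)) * (m : ℝ) ^ k / k.factorial else 0)|
        ≤ Real.exp (-(m : ℝ)) * (m : ℝ) ^ m / m.factorial) ∧
    (∀ n : ℕ, 1 ≤ n → ∀ A : Set ℕ,
      |(∑' k : ℕ, if k ∈ A then
          Real.exp (-(4 * n ^ 2 : ℝ)) * (4 * n ^ 2 : ℝ) ^ k / k.factorial else 0) -
        (∑' k : ℕ, if k + 1 ∈ A then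
          Real.exp (-(4 * n ^ 2 : ℝ)) * (4 * n ^ 2 : ℝ) ^ k / k.factorial else 0)|
        ≤ 1 / n) := by
  have tv_le (m : ℕ) (A : Set ℕ) := abs_tsum_indicator_poissonMass_sub_shift_le m A
  simp only [poissonMass, Set.indicator_apply, Set.mem_preimage] at tv_le
  refine ⟨fun m _ A => tv_le m A, fun n hn A => ?_⟩
  have hcast : ((4 * n ^ 2 : ℕ) : ℝ) = 4 * n ^ 2 := by push_cast; ring
  have hsqrt : (n : ℝ) ≤ √(2 * π * (4 * n ^ 2 : ℕ)) := by
    rw [hcast, le_sqrt (by positivity) (by positivity)]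
    nlinarith [pi_gt_three, sq_nonneg (n : ℝ)]
  rw [← hcast]
  calc _ ≤ poissonMass (4 * n ^ 2 : ℕ) (4 * n ^ 2) := tv_le (4 * n ^ 2) A
    _ ≤ (√(2 * π * (4 * n ^ 2 : ℕ)))⁻¹ := poissonMass_self_le_inv_sqrt (by positivity)
    _ ≤ 1 / n := by
      rw [one_div]
      exact inv_anti₀ (by positivity) hsqrt
end

section
/- Let l : (0,∞) → (0,∞) be continuous, non-increasing, bounded (l(0) := lim_{r→0} l(r) < ∞), with ∫₀^∞ r^{d−1} l(r) dr < ∞, and let η be a unit-intensity Poisson process on ℝ^d. Then the random field Ψ(y) = Σ_{x∈η} l(|x−y|) is almost surely continuous on ℝ^d. -/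
/-! A Poisson process with intensity `μ` has `𝔼 η(A) = μ(A)` (the mean of a Poisson law), so
`P.bind η ≤ μ` and, by Campbell's inequality `𝔼 ∫ f dη ≤ ∫ f dμ`, almost surely `η` gives finite
mass to every ball and `∫ l(‖x‖/2) dη(x) < ∞`; the latter integral is finite for Lebesgue measure
by polar coordinates. For `‖y‖ ≤ R`, `l(‖x - y‖)` is bounded by `l(0)` on the ball of radius `2R`
and by `l(‖x‖/2)` outside it, so continuity of `Ψ` follows from dominated convergence. -/

open MeasureTheory
open scoped ENNReal

/-- A Poisson point process on ℝ^d with intensity measure `μ`, realized as a random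
(integer-valued) measure `η` on a probability space `(Ω, P)`: for each measurable set `A`
of finite intensity, `η(A)` is Poisson distributed with parameter `μ(A)`, and the counts
of finitely many pairwise disjoint measurable sets are independent. -/
structure IsPoissonPP {d : ℕ} {Ω : Type*} [MeasurableSpace Ω] (P : Measure Ω)
    (μ : Measure (EuclideanSpace ℝ (Fin d)))
    (η : Ω → Measure (EuclideanSpace ℝ (Fin d))) : Prop where
  measurable_count : ∀ A : Set (EuclideanSpace ℝ (Fin d)), MeasurableSet A →
    Measurable fun ω => η ω A
  integer_valued : ∀ ω, ∀ A : Set (EuclideanSpace ℝ (Fin d)),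
    η ω A = ⊤ ∨ ∃ n : ℕ, η ω A = n
  poisson_count : ∀ A : Set (EuclideanSpace ℝ (Fin d)), MeasurableSet A → μ A ≠ ⊤ →
    ∀ n : ℕ, P {ω | η ω A = n} =
      ENNReal.ofReal (Real.exp (-(μ A).toReal) * (μ A).toReal ^ n / n.factorial)
  indep_count : ∀ (k : ℕ) (A : Fin k → Set (EuclideanSpace ℝ (Fin d))),
    (∀ i, MeasurableSet (A i)) → Pairwise (Function.onFun Disjoint A) →
    ∀ n : Fin k → ℕ, P (⋂ i, {ω | η ω (A i) = n i}) = ∏ i, P {ω | η ω (A i) = n i}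

open ProbabilityTheory
open scoped NNReal

lemma ProbabilityTheory.lintegral_natCast_poissonMeasure (r : ℝ≥0) :
    ∫⁻ n, (n : ℝ≥0∞) ∂poissonMeasure r = r := by
  have hsucc : ∀ n : ℕ, ((n + 1 : ℕ) : ℝ≥0∞) * poissonMeasure r {n + 1} =
      r * poissonMeasure r {n} := by
    intro n
    rw [poissonMeasure_singleton, poissonMeasure_singleton, ← ENNReal.ofReal_natCast,
      ← ENNReal.ofReal_coe_nnreal, ← ENNReal.ofReal_mul (by positivity),
      ← ENNReal.ofReal_mul r.coe_nonneg, Nat.factorial_succ]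
    congr 1
    push_cast
    field_simp
    ring
  have htotal : ∑' n, poissonMeasure r {n} = 1 := by
    simpa using (lintegral_countable' (μ := poissonMeasure r) 1).symm
  rw [lintegral_countable', tsum_eq_zero_add' ENNReal.summable]
  simp only [Nat.cast_zero, zero_mul, zero_add, hsucc, ENNReal.tsum_mul_left, htotal, mul_one]

lemma lintegral_eq_tsum_natCast_mul_measure {Ω : Type*} [MeasurableSpace Ω] {μ : Measure Ω}
    {X : Ω → ℝ≥0∞} (hX : Measurable X) (hnat : ∀ᵐ ω ∂μ, ∃ n : ℕ, X ω = n) :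
    ∫⁻ ω, X ω ∂μ = ∑' n : ℕ, n * μ {ω | X ω = n} := by
  have hmeas : ∀ n : ℕ, MeasurableSet {ω | X ω = n} := fun n => hX (measurableSet_singleton _)
  have hdisj : Pairwise (Function.onFun Disjoint fun n : ℕ => {ω | X ω = n}) :=
    (pairwise_disjoint_fiber X).comp_of_injective Nat.cast_injective
  have hrestrict : μ.restrict (⋃ n : ℕ, {ω | X ω = n}) = μ :=
    Measure.restrict_eq_self_of_ae_mem (by simpa using hnat)
  conv_lhs => rw [← hrestrict, lintegral_iUnion hmeas hdisj]
  refine tsum_congr fun n => ?_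
  rw [setLIntegral_congr_fun (hmeas n) (fun ω hω => hω), setLIntegral_const]

lemma lintegral_eq_of_measure_eq_poissonMeasure {Ω : Type*} [MeasurableSpace Ω] {P : Measure Ω}
    [IsProbabilityMeasure P] {X : Ω → ℝ≥0∞} (hX : Measurable X) {r : ℝ≥0}
    (hlaw : ∀ n : ℕ, P {ω | X ω = n} = poissonMeasure r {n}) :
    ∫⁻ ω, X ω ∂P = r := by
  have hmeas : ∀ n : ℕ, MeasurableSet {ω | X ω = n} := fun n => hX (measurableSet_singleton _)
  have hdisj : Pairwise (Function.onFun Disjoint fun n : ℕ => {ω | X ω = n}) :=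
    (pairwise_disjoint_fiber X).comp_of_injective Nat.cast_injective
  have hnat : ∀ᵐ ω ∂P, ∃ n : ℕ, X ω = n := by
    have hfull : P (⋃ n : ℕ, {ω | X ω = n}) = 1 := by
      rw [measure_iUnion hdisj hmeas]
      simp only [hlaw]
      simpa using (lintegral_countable' (μ := poissonMeasure r) 1).symm
    filter_upwards [mem_ae_iff.2 ((prob_compl_eq_zero_iff (.iUnion hmeas)).2 hfull)] with ω hω
    simpa using hω
  rw [lintegral_eq_tsum_natCast_mul_measure hX hnat, ← lintegral_natCast_poissonMeasure r,
    lintegral_countable']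
  simp only [hlaw]

namespace IsPoissonPP

variable {d : ℕ} {Ω : Type*} [MeasurableSpace Ω] {P : Measure Ω}
  {μ : Measure (EuclideanSpace ℝ (Fin d))} {η : Ω → Measure (EuclideanSpace ℝ (Fin d))}

lemma measurable (hη : IsPoissonPP P μ η) : Measurable η :=
  Measure.measurable_of_measurable_coe η hη.measurable_count

lemma lintegral_apply_le [IsProbabilityMeasure P] (hη : IsPoissonPP P μ η)
    {A : Set (EuclideanSpace ℝ (Fin d))} (hA : MeasurableSet A) :
    ∫⁻ ω, η ω A ∂P ≤ μ A := by
  by_cases hfin : μ A = ⊤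
  · simp [hfin]
  refine (lintegral_eq_of_measure_eq_poissonMeasure (hη.measurable_count A hA)
    (r := (μ A).toNNReal) fun n => ?_).trans_le ENNReal.coe_toNNReal_le_self
  rw [hη.poisson_count A hA hfin, poissonMeasure_singleton, ENNReal.coe_toNNReal_eq_toReal]

lemma bind_le [IsProbabilityMeasure P] (hη : IsPoissonPP P μ η) : P.bind η ≤ μ :=
  Measure.le_iff.2 fun A hA => by
    rw [Measure.bind_apply hA hη.measurable.aemeasurable]
    exact hη.lintegral_apply_le hA

lemma ae_lintegral_lt_top [IsProbabilityMeasure P] (hη : IsPoissonPP P μ η)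
    {f : EuclideanSpace ℝ (Fin d) → ℝ≥0∞} (hf : Measurable f) (hfin : ∫⁻ x, f x ∂μ ≠ ⊤) :
    ∀ᵐ ω ∂P, ∫⁻ x, f x ∂η ω < ⊤ := by
  refine ae_lt_top ((Measure.measurable_lintegral hf).comp hη.measurable)
    (ne_top_of_le_ne_top hfin ?_)
  rw [← Measure.lintegral_bind hη.measurable.aemeasurable hf.aemeasurable]
  exact lintegral_mono' hη.bind_le le_rfl

lemma ae_apply_lt_top [IsProbabilityMeasure P] (hη : IsPoissonPP P μ η)
    {A : Set (EuclideanSpace ℝ (Fin d))} (hA : MeasurableSet A) (hfin : μ A ≠ ⊤) :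
    ∀ᵐ ω ∂P, η ω A < ⊤ :=
  ae_lt_top (hη.measurable_count A hA) (ne_top_of_le_ne_top hfin (hη.lintegral_apply_le hA))

lemma ae_forall_measure_closedBall_lt_top [IsProbabilityMeasure P] [IsFiniteMeasureOnCompacts μ]
    (hη : IsPoissonPP P μ η) :
    ∀ᵐ ω ∂P, ∀ r : ℝ, η ω (Metric.closedBall 0 r) < ⊤ := by
  have hnat := ae_all_iff.2 fun n : ℕ =>
    hη.ae_apply_lt_top (A := Metric.closedBall 0 n) Metric.isClosed_closedBall.measurableSet
      measure_closedBall_lt_top.ne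
  filter_upwards [hnat] with ω hω r
  obtain ⟨n, hn⟩ := exists_nat_ge r
  exact (measure_mono (Metric.closedBall_subset_closedBall hn)).trans_lt (hω n)

end IsPoissonPP

section RadialField

open Metric Topology

variable {E : Type*} [NormedAddCommGroup E] {l : ℝ → ℝ}

lemma integrable_comp_norm_div_two [NormedSpace ℝ E] [Nontrivial E] [FiniteDimensional ℝ E]
    [MeasurableSpace E] [BorelSpace E] (μ : Measure E) [μ.IsAddHaarMeasure]
    (hint : IntegrableOn (fun r => r ^ (Module.finrank ℝ E - 1) * l r) (Set.Ioi 0)) :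
    Integrable (fun x : E => l (‖x‖ / 2)) μ := by
  have h : Integrable (fun x : E => l ‖x‖) μ := (integrable_fun_norm_addHaar μ).2 hint
  convert h.comp_smul (inv_ne_zero (two_ne_zero : (2 : ℝ) ≠ 0)) using 2 with x
  rw [norm_smul, Real.norm_of_nonneg (by norm_num), inv_mul_eq_div]

lemma ofReal_comp_norm_sub_le (hmono : AntitoneOn l (Set.Ici 0)) {R : ℝ} {x y : E}
    (hy : ‖y‖ ≤ R) :
    ENNReal.ofReal (l ‖x - y‖) ≤
      (closedBall 0 (2 * R)).indicator (fun _ => ENNReal.ofReal (l 0)) x +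
        ENNReal.ofReal (l (‖x‖ / 2)) := by
  have hxy := norm_sub_norm_le x y
  by_cases hx : x ∈ closedBall 0 (2 * R)
  · rw [Set.indicator_of_mem hx]
    exact le_add_right (ENNReal.ofReal_le_ofReal
      (hmono Set.self_mem_Ici (norm_nonneg _) (norm_nonneg _)))
  · rw [Set.indicator_of_notMem hx, zero_add]
    rw [mem_closedBall_zero_iff, not_le] at hx
    exact ENNReal.ofReal_le_ofReal
      (hmono (by positivity : 0 ≤ ‖x‖ / 2) (norm_nonneg _) (by linarith))

lemma continuous_toReal_lintegral_comp_norm_sub [MeasurableSpace E] [OpensMeasurableSpace E]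
    (hcont : ContinuousOn l (Set.Ici 0))
    (hmono : AntitoneOn l (Set.Ici 0)) {ν : Measure E} (hball : ∀ r, ν (closedBall 0 r) ≠ ⊤)
    (htail : ∫⁻ x, ENNReal.ofReal (l (‖x‖ / 2)) ∂ν ≠ ⊤) :
    Continuous fun y => (∫⁻ x, ENNReal.ofReal (l ‖x - y‖) ∂ν).toReal := by
  have hl : ∀ {f : E → ℝ}, Continuous f → (∀ x, 0 ≤ f x) →
      Continuous fun x => ENNReal.ofReal (l (f x)) := fun hf hf0 =>
    ENNReal.continuous_ofReal.comp (hcont.comp_continuous hf hf0)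
  rw [continuous_iff_continuousAt]
  intro y₀
  set bound : E → ℝ≥0∞ := fun x => (closedBall 0 (2 * (‖y₀‖ + 1))).indicator
    (fun _ => ENNReal.ofReal (l 0)) x + ENNReal.ofReal (l (‖x‖ / 2))
  have hbound_fin : ∫⁻ x, bound x ∂ν ≠ ⊤ := by
    rw [lintegral_add_left (measurable_const.indicator isClosed_closedBall.measurableSet),
      lintegral_indicator_const isClosed_closedBall.measurableSet]
    exact ENNReal.add_ne_top.2 ⟨ENNReal.mul_ne_top ENNReal.ofReal_ne_top (hball _), htail⟩
  have hle : ∀ᶠ y in 𝓝 y₀, ∀ᵐ x ∂ν, ENNReal.ofReal (l ‖x - y‖) ≤ bound x := by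
    filter_upwards [ball_mem_nhds y₀ one_pos] with y hy
    refine ae_of_all _ fun x => ofReal_comp_norm_sub_le hmono ?_
    have := norm_sub_norm_le y y₀
    rw [mem_ball, dist_eq_norm] at hy
    linarith
  have htendsto := tendsto_lintegral_filter_of_dominated_convergence bound
    (.of_forall fun y => (hl (continuous_id.sub continuous_const).norm
      fun _ => norm_nonneg _).measurable) hle hbound_fin
    (ae_of_all _ fun x => (hl (continuous_const.sub continuous_id).norm
      fun _ => norm_nonneg _).continuousAt)
  have hfin : ∫⁻ x, ENNReal.ofReal (l ‖x - y₀‖) ∂ν ≠ ⊤ :=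
    ne_top_of_le_ne_top hbound_fin (lintegral_mono fun x => ofReal_comp_norm_sub_le hmono
      (by linarith))
  exact (ENNReal.tendsto_toReal hfin).comp htendsto

end RadialField

theorem field_ae_continuous_general {d : ℕ} (hd : 1 ≤ d) {Ω : Type*} [MeasurableSpace Ω]
    (P : Measure Ω) [IsProbabilityMeasure P]
    (η : Ω → Measure (EuclideanSpace ℝ (Fin d)))
    (hη : IsPoissonPP P (volume : Measure (EuclideanSpace ℝ (Fin d))) η)
    (l : ℝ → ℝ) (hcont : ContinuousOn l (Set.Ici 0))
    (hmono : AntitoneOn l (Set.Ici 0))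
    (hint : IntegrableOn (fun r => r ^ (d - 1) * l r) (Set.Ioi 0)) :
    ∀ᵐ ω ∂P, Continuous fun y : EuclideanSpace ℝ (Fin d) =>
      (∫⁻ x, ENNReal.ofReal (l ‖x - y‖) ∂(η ω)).toReal := by
  have : Nontrivial (EuclideanSpace ℝ (Fin d)) :=
    Module.nontrivial_of_finrank_pos (by rw [finrank_euclideanSpace_fin]; omega)
  have htail := integrable_comp_norm_div_two (l := l) volume
    (by rwa [finrank_euclideanSpace_fin])
  have htail_meas : Measurable fun x : EuclideanSpace ℝ (Fin d) => ENNReal.ofReal (l (‖x‖ / 2)) :=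
    (hcont.comp_continuous (continuous_norm.div_const 2)
      fun _ => Set.mem_Ici.2 (by positivity)).measurable.ennreal_ofReal
  filter_upwards [hη.ae_lintegral_lt_top htail_meas htail.lintegral_lt_top.ne,
    hη.ae_forall_measure_closedBall_lt_top] with ω htail_ω hball_ω
  exact continuous_toReal_lintegral_comp_norm_sub hcont hmono (fun r => (hball_ω r).ne) htail_ω.ne

/-- If l : [0,∞) → (0,∞) is continuous, non-increasing (hence bounded by l(0)), with
∫₀^∞ r^{d−1} l(r) dr < ∞, and η is a unit-intensity Poisson process on ℝ^d, then the
random field Ψ(y) = Σ_{x∈η} l(|x−y|) is almost surely continuous on ℝ^d. -/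
theorem field_ae_continuous {d : ℕ} (hd : 1 ≤ d) {Ω : Type*} [MeasurableSpace Ω]
    (P : Measure Ω) [IsProbabilityMeasure P]
    (η : Ω → Measure (EuclideanSpace ℝ (Fin d)))
    (hη : IsPoissonPP P (volume : Measure (EuclideanSpace ℝ (Fin d))) η)
    (l : ℝ → ℝ) (hcont : ContinuousOn l (Set.Ici 0))
    (hmono : AntitoneOn l (Set.Ici 0)) (hpos : ∀ r, 0 ≤ r → 0 < l r)
    (hint : IntegrableOn (fun r => r ^ (d - 1) * l r) (Set.Ioi 0)) :
    ∀ᵐ ω ∂P, Continuous fun y : EuclideanSpace ℝ (Fin d) =>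
      (∫⁻ x, ENNReal.ofReal (l ‖x - y‖) ∂(η ω)).toReal :=
  field_ae_continuous_general hd P η hη l hcont hmono hint
end
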